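/- arXiv:0710.0261 — 2 statements merged into one kernel-verified Lean document; each statement's English description precedes it below -/
import Mathlib

section
/- Let C(q) = Σ_{p=2}^{k+2} (1/(p-1)_q) e_{p,p} - Σ_{p=2}^{k+1} (1/(p)_q) e_{p,p+1} and let H^∞ = Σ_{p=2}^{k+1} (e_{p,p+1} + e_{p+1,p}). Then H_{(k,1)}(q) · C(q) = C(q) · H^∞. -/
open Finset Matrix

/-- The `q`-number `(m)_q = (q^m - q^{-m})/(q - q^{-1})`. -/
noncomputable def qnum (q : ℂ) (m : ℕ) : ℂ := (q ^ m - q⁻¹ ^ m) / (q - q⁻¹)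

/-- The matrix unit `e_{i,j}` on the span of `v_2, ..., v_{k+2}` (zero if a label lies
outside `{2, ..., k+2}`); `v_{a+2}` corresponds to the index `a : Fin (k+1)`. -/
def E (k i j : ℕ) : Matrix (Fin (k+1)) (Fin (k+1)) ℂ :=
  Matrix.of fun a b => if (a : ℕ) + 2 = i ∧ (b : ℕ) + 2 = j then 1 else 0

/-- The corner representation `ρ_{(k,1)}` of the Hecke algebra `H_{k+2}`. -/
noncomputable def rho (k : ℕ) (q : ℂ) (p : ℕ) : Matrix (Fin (k+1)) (Fin (k+1)) ℂ :=
  q • 1 + (qnum q (p-1) / qnum q p) • (E k p (p+1) - E k p p)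
        + (qnum q (p+1) / qnum q p) • (E k (p+1) p - E k (p+1) (p+1))

/-- The traceless Hamiltonian `H_{(k,1)}(q)`. -/
noncomputable def HH (k : ℕ) (q : ℂ) : Matrix (Fin (k+1)) (Fin (k+1)) ℂ :=
  (∑ p ∈ Finset.Icc 2 (k+1),
      ((qnum q (p+1) / qnum q p) • E k p (p+1) + (qnum q (p-1) / qnum q p) • E k (p+1) p
        - (1 / (qnum q p * qnum q (p-1))) • E k p p))
    + (qnum q k / qnum q (k+1)) • E k (k+2) (k+2)

/-- The upper triangular matrix `C(q)`. -/
noncomputable def Cmat (k : ℕ) (q : ℂ) : Matrix (Fin (k+1)) (Fin (k+1)) ℂ :=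
  (∑ p ∈ Finset.Icc 2 (k+2), (qnum q (p-1))⁻¹ • E k p p)
    - (∑ p ∈ Finset.Icc 2 (k+1), (qnum q p)⁻¹ • E k p (p+1))

/-- The `q → ∞` limit Hamiltonian `H^∞ = Σ_{p=2}^{k+1} (e_{p,p+1} + e_{p+1,p})`,
the adjacency matrix of the path (type `A`) Dynkin diagram. -/
noncomputable def Hinf (k : ℕ) : Matrix (Fin (k+1)) (Fin (k+1)) ℂ :=
  ∑ p ∈ Finset.Icc 2 (k+1), (E k p (p+1) + E k (p+1) p)

/-!
Write `(m)` for `qnum q m` and `e_b = v_{b+2}`. The columns of `C(q)` are `f₀ = e₀ / (1)` and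
`f_b = (e_b - e_{b-1}) / (b+1)`, and the relation says that `H_{(k,1)}(q)` acts on them as `H^∞`
acts on the standard basis: `H f_b = f_{b-1} + f_{b+1}`, where `f_{-1} = f_{k+1} = 0`.
Entrywise this comes down to `(1) = 1` and the Cassini-type identity `(m+1)² = 1 + (m)(m+2)`,
i.e. `(q^{m+1} - q^{-m-1})² - (q^m - q^{-m})(q^{m+2} - q^{-m-2}) = (q - q⁻¹)²`. In the last
column the missing `f_{k+1}` is compensated by the corner entry `(k)/(k+1)` of `H_{(k,1)}(q)`.
-/

theorem sub_pow_succ_sq_sub_mul {R : Type*} [CommRing R] (x y : R) (m : ℕ) :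
    (x ^ (m + 1) - y ^ (m + 1)) ^ 2 - (x ^ m - y ^ m) * (x ^ (m + 2) - y ^ (m + 2)) =
      (x * y) ^ m * (x - y) ^ 2 := by
  ring

theorem qnum_zero (q : ℂ) : qnum q 0 = 0 := by simp [qnum]

section qnum

variable {q : ℂ}

theorem qnum_one (hq : q - q⁻¹ ≠ 0) : qnum q 1 = 1 := by
  rw [qnum, pow_one, pow_one, div_self hq]

theorem sub_inv_ne_zero_of_qnum_ne_zero {m : ℕ} (h : qnum q m ≠ 0) : q - q⁻¹ ≠ 0 := by
  intro h0
  simp [qnum, h0] at h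

theorem qnum_succ_sq (hq : q - q⁻¹ ≠ 0) (m : ℕ) :
    qnum q (m + 1) ^ 2 = 1 + qnum q m * qnum q (m + 2) := by
  have hq0 : q ≠ 0 := by rintro rfl; simp at hq
  have h := sub_pow_succ_sq_sub_mul q q⁻¹ m
  rw [mul_inv_cancel₀ hq0, one_pow, one_mul] at h
  have h' : (q ^ (m + 1) - q⁻¹ ^ (m + 1)) ^ 2 =
      (q - q⁻¹) ^ 2 + (q ^ m - q⁻¹ ^ m) * (q ^ (m + 2) - q⁻¹ ^ (m + 2)) := by
    linear_combination h
  rw [qnum, qnum, qnum, div_pow, div_mul_div_comm, ← sq, h', add_div,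
    div_self (pow_ne_zero 2 hq)]

end qnum

section MatrixUnits

variable {k : ℕ}

theorem E_apply (i j : ℕ) (a b : Fin (k + 1)) :
    E k i j a b = if (a : ℕ) + 2 = i ∧ (b : ℕ) + 2 = j then 1 else 0 :=
  rfl

theorem E_transpose (i j : ℕ) : (E k i j)ᵀ = E k j i := by
  ext a b
  simp only [E, Matrix.transpose_apply, Matrix.of_apply, and_comm]

theorem sum_smul_E_add_right_apply (s : Finset ℕ) (f : ℕ → ℂ) (d : ℕ)
    (a b : Fin (k + 1)) :
    (∑ p ∈ s, f p • E k p (p + d)) a b =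
      if (b : ℕ) = a + d ∧ (a : ℕ) + 2 ∈ s then f (a + 2) else 0 := by
  simp only [Matrix.sum_apply, Matrix.smul_apply, E_apply, smul_eq_mul, mul_ite, mul_one,
    mul_zero, ite_and, Finset.sum_ite_eq]
  split_ifs <;> first | rfl | omega

theorem sum_smul_E_add_left_apply (s : Finset ℕ) (f : ℕ → ℂ) (d : ℕ)
    (a b : Fin (k + 1)) :
    (∑ p ∈ s, f p • E k (p + d) p) a b =
      if (a : ℕ) = b + d ∧ (b : ℕ) + 2 ∈ s then f (b + 2) else 0 := by
  have h : ∑ p ∈ s, f p • E k (p + d) p = (∑ p ∈ s, f p • E k p (p + d))ᵀ := by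
    simp only [Matrix.transpose_sum, Matrix.transpose_smul, E_transpose]
  rw [h, Matrix.transpose_apply, sum_smul_E_add_right_apply]

theorem sum_smul_E_self_apply (s : Finset ℕ) (f : ℕ → ℂ) (a b : Fin (k + 1)) :
    (∑ p ∈ s, f p • E k p p) a b =
      if b = a ∧ (a : ℕ) + 2 ∈ s then f (a + 2) else 0 := by
  simpa [Fin.ext_iff] using sum_smul_E_add_right_apply s f 0 a b

end MatrixUnits

-- As in `E`, the index `a : ℕ` stands for the basis vector `v_{a+2}`.

noncomputable def hhEntry (k : ℕ) (q : ℂ) (a b : ℕ) : ℂ :=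
  if b = a + 1 then qnum q (a + 3) / qnum q (a + 2)
  else if a = b + 1 then qnum q (b + 1) / qnum q (b + 2)
  else if a = b then
    if a < k then -(qnum q (a + 2) * qnum q (a + 1))⁻¹ else qnum q k / qnum q (k + 1)
  else 0

noncomputable def cmatEntry (q : ℂ) (a b : ℕ) : ℂ :=
  if a = b then (qnum q (b + 1))⁻¹ else if a + 1 = b then -(qnum q (b + 1))⁻¹ else 0

def hinfEntry (a b : ℕ) : ℂ :=
  (if a + 1 = b then 1 else 0) + if a = b + 1 then 1 else 0

section Entries

variable {k : ℕ} {q : ℂ}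

theorem HH_apply (a b : Fin (k + 1)) : HH k q a b = hhEntry k q a b := by
  simp only [HH, Finset.sum_add_distrib, Finset.sum_sub_distrib, Matrix.add_apply,
    Matrix.sub_apply, sum_smul_E_add_right_apply, sum_smul_E_self_apply,
    sum_smul_E_add_left_apply, Matrix.smul_apply, E_apply, smul_eq_mul, Finset.mem_Icc, hhEntry,
    Fin.ext_iff]
  obtain ⟨a, ha⟩ := a
  obtain ⟨b, hb⟩ := b
  dsimp only
  split_ifs <;> first | omega | (subst_vars; simp)

theorem Cmat_apply (a b : Fin (k + 1)) : Cmat k q a b = cmatEntry q a b := by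
  simp only [Cmat, Matrix.sub_apply, sum_smul_E_add_right_apply, sum_smul_E_self_apply,
    Finset.mem_Icc, cmatEntry, Fin.ext_iff]
  obtain ⟨a, ha⟩ := a
  obtain ⟨b, hb⟩ := b
  dsimp only
  split_ifs <;> first | omega | (subst_vars; simp)

theorem Hinf_apply (a b : Fin (k + 1)) : Hinf k a b = hinfEntry a b := by
  have h : Hinf k = ∑ p ∈ Finset.Icc 2 (k + 1),
      ((1 : ℂ) • E k p (p + 1) + (1 : ℂ) • E k (p + 1) p) := by
    simp only [Hinf, one_smul]
  simp only [h, Finset.sum_add_distrib, Matrix.add_apply, sum_smul_E_add_right_apply,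
    sum_smul_E_add_left_apply, Finset.mem_Icc, hinfEntry]
  obtain ⟨a, ha⟩ := a
  obtain ⟨b, hb⟩ := b
  dsimp only
  split_ifs <;> first | omega | (subst_vars; simp)

theorem sum_mul_cmatEntry_zero (x : ℕ → ℂ) :
    ∑ c ∈ Finset.range (k + 1), x c * cmatEntry q c 0 = x 0 / qnum q 1 := by
  simp [cmatEntry, div_eq_mul_inv]

theorem sum_mul_cmatEntry_succ (x : ℕ → ℂ) {b : ℕ} (hb : b + 1 ≤ k) :
    ∑ c ∈ Finset.range (k + 1), x c * cmatEntry q c (b + 1) =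
      (x (b + 1) - x b) / qnum q (b + 2) := by
  rw [Finset.sum_eq_add_of_mem (b + 1) b (Finset.mem_range.2 (by omega))
    (Finset.mem_range.2 (by omega)) (by omega) (fun c _ hc ↦ by simp [cmatEntry, hc.1, hc.2])]
  simp only [cmatEntry, ↓reduceIte, Nat.left_eq_add, one_ne_zero, mul_neg]
  ring

theorem sum_mul_hinfEntry_zero (y : ℕ → ℂ) :
    ∑ c ∈ Finset.range (k + 1), y c * hinfEntry c 0 = if 0 < k then y 1 else 0 := by
  simp [hinfEntry, Finset.sum_ite_eq']

theorem sum_mul_hinfEntry_succ (y : ℕ → ℂ) {b : ℕ} (hb : b + 1 ≤ k) :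
    ∑ c ∈ Finset.range (k + 1), y c * hinfEntry c (b + 1) =
      y b + if b + 1 < k then y (b + 2) else 0 := by
  simp [hinfEntry, mul_add, Finset.sum_add_distrib, Finset.sum_ite_eq', show b ≤ k by omega]

end Entries

section Columns

variable {k : ℕ} {q : ℂ}

theorem intertwine_col_zero (hn : ∀ m, 1 ≤ m → m ≤ k + 1 → qnum q m ≠ 0) {a : ℕ}
    (ha : a ≤ k) :
    hhEntry k q a 0 / qnum q 1 = if 0 < k then cmatEntry q a 1 else 0 := by
  have hq : q - q⁻¹ ≠ 0 := sub_inv_ne_zero_of_qnum_ne_zero (hn 1 le_rfl (by omega))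
  rw [qnum_one hq, div_one]
  rcases Nat.eq_zero_or_pos k with rfl | hk
  · obtain rfl : a = 0 := by omega
    simp [hhEntry, qnum_zero]
  have h2 := hn 2 (by omega) (by omega)
  obtain rfl | rfl | ha : a = 0 ∨ a = 1 ∨ 1 < a := by omega
  · simp [hhEntry, cmatEntry, hk, qnum_one hq]
  · simp [hhEntry, cmatEntry, hk, qnum_one hq]
  · simp [hhEntry, cmatEntry, show a ≠ 0 by omega, show a ≠ 1 by omega]

theorem intertwine_col_succ (hn : ∀ m, 1 ≤ m → m ≤ k + 1 → qnum q m ≠ 0) {a b : ℕ}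
    (ha : a ≤ k) (hb : b + 1 ≤ k) :
    (hhEntry k q a (b + 1) - hhEntry k q a b) / qnum q (b + 2) =
      cmatEntry q a b + if b + 1 < k then cmatEntry q a (b + 2) else 0 := by
  have hq : q - q⁻¹ ≠ 0 := sub_inv_ne_zero_of_qnum_ne_zero (hn 1 le_rfl (by omega))
  have h1 := hn (b + 1) (by omega) (by omega)
  have h2 := hn (b + 2) (by omega) (by omega)
  -- In each case `omega` decides all the index conditions in the entries.
  obtain h | rfl | rfl | rfl | rfl :
      (a + 1 < b ∨ b + 2 < a) ∨ a + 1 = b ∨ b = a ∨ a = b + 1 ∨ a = b + 2 := by omega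
  · simp (disch := omega) only [hhEntry, cmatEntry, if_pos, if_neg, ite_self]
    ring
  · simp (disch := omega) only [hhEntry, cmatEntry, if_pos, if_neg, if_true, ite_self]
    field_simp
    ring
  · simp (disch := omega) only [hhEntry, cmatEntry, if_pos, if_neg, if_true, ite_self]
    field_simp
    linear_combination -qnum_succ_sq hq (b + 1)
  · rcases Nat.lt_or_ge (b + 1) k with hk | hk
    · have h3 := hn (b + 3) (by omega) (by omega)
      simp (disch := omega) only [hhEntry, cmatEntry, if_pos, if_neg, if_true]
      field_simp
      linear_combination qnum_succ_sq hq (b + 1)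
    · obtain rfl : k = b + 1 := by omega
      simp (disch := omega) only [hhEntry, cmatEntry, if_pos, if_neg, if_true]
      ring
  · have h3 := hn (b + 3) (by omega) (by omega)
    simp (disch := omega) only [hhEntry, cmatEntry, if_pos, if_neg, if_true]
    field_simp
    ring

end Columns

theorem HH_intertwine_general (k : ℕ) (q : ℂ)
    (hgen : ∀ m : ℕ, 1 ≤ m → m ≤ k + 1 → qnum q m ≠ 0) :
    HH k q * Cmat k q = Cmat k q * Hinf k := by
  ext ⟨a, ha⟩ ⟨b, hb⟩
  simp only [Matrix.mul_apply, HH_apply, Cmat_apply, Hinf_apply]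
  rw [Fin.sum_univ_eq_sum_range (fun c ↦ hhEntry k q a c * cmatEntry q c b),
    Fin.sum_univ_eq_sum_range (fun c ↦ cmatEntry q a c * hinfEntry c b)]
  rcases b with _ | b
  · rw [sum_mul_cmatEntry_zero, sum_mul_hinfEntry_zero, intertwine_col_zero hgen (by omega)]
  · rw [sum_mul_cmatEntry_succ _ (by omega), sum_mul_hinfEntry_succ _ (by omega),
      intertwine_col_succ hgen (by omega) (by omega)]

/-- The intertwining relation `H_{(k,1)}(q) C(q) = C(q) H^∞`. -/
theorem HH_intertwine (k : ℕ) (q : ℂ) (hq : q ≠ 0)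
    (hgen : ∀ m : ℕ, 1 ≤ m → m ≤ k + 1 → qnum q m ≠ 0) :
    HH k q * Cmat k q = Cmat k q * Hinf k :=
  HH_intertwine_general k q hgen
end

section
/- Let N = Σ_{p=2}^{k+2} e_{p,p} - Σ_{p=2}^{k+1} e_{p,p+1}. Then for any two generic parameters q and r, N^{-1} C(q) C(r)^{-1} N = diag(1, (2)_r/(2)_q, (3)_r/(3)_q, ..., (k+1)_r/(k+1)_q). In particular, the matrices C(q)C(r)^{-1} for different values of the parameters commute with each other. -/
/-!
`C(q)` is `N` with its columns rescaled: `C(q) = N · diag(1/(1)_q, …, 1/(k+1)_q)`, since the two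
nonzero entries `1/(p-1)_q` and `-1/(p-1)_q` of column `p` of `C(q)` share the factor
`1/(p-1)_q`. Hence `C(q) C(r)⁻¹ = N · diag((m)_r/(m)_q) · N⁻¹`, so the unipotent matrix `N`
diagonalises all these products simultaneously.
-/

open Finset Matrix

/-- The upper triangular matrix `N = Σ_{p=2}^{k+2} e_{p,p} - Σ_{p=2}^{k+1} e_{p,p+1}`. -/
noncomputable def Nmat (k : ℕ) : Matrix (Fin (k+1)) (Fin (k+1)) ℂ :=
  (∑ p ∈ Finset.Icc 2 (k+2), E k p p) - (∑ p ∈ Finset.Icc 2 (k+1), E k p (p+1))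

section Conjugation

variable {n R : Type*} [Fintype n] [DecidableEq n] [CommRing R] {P : Matrix n n R}

theorem Matrix.nonsing_inv_mul_conj_mul (hP : IsUnit P.det) (A : Matrix n n R) :
    P⁻¹ * (P * A * P⁻¹) * P = A := by
  rw [Matrix.mul_assoc P, nonsing_inv_mul_cancel_left _ _ hP,
    nonsing_inv_mul_cancel_right _ _ hP]

theorem Commute.mul_mul_nonsing_inv {A B : Matrix n n R} (h : Commute A B) (hP : IsUnit P.det) :
    Commute (P * A * P⁻¹) (P * B * P⁻¹) := by
  have conj_mul : ∀ X Y : Matrix n n R, P * X * P⁻¹ * (P * Y * P⁻¹) = P * (X * Y) * P⁻¹ := by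
    intro X Y
    simp only [Matrix.mul_assoc, nonsing_inv_mul_cancel_left _ _ hP]
  rw [Commute, SemiconjBy, conj_mul, conj_mul, h.eq]

end Conjugation

section Entries

variable (k : ℕ)

theorem sum_smul_E_diag_apply (c : ℕ → ℂ) (a b : Fin (k+1)) :
    (∑ p ∈ Icc 2 (k+2), c p • E k p p) a b = if a = b then c (a + 2) else 0 := by
  simp only [Matrix.sum_apply, Matrix.smul_apply, E, Matrix.of_apply, smul_eq_mul,
    mul_ite, mul_one, mul_zero]
  rw [sum_eq_single ((a : ℕ) + 2)]
  · by_cases h : a = b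
    · simp [h]
    · rw [if_neg (by rintro ⟨-, h2⟩; exact h (Fin.ext (by omega))), if_neg h]
  · rintro p - hp
    exact if_neg fun h => hp h.1.symm
  · intro h
    exact absurd (mem_Icc.mpr ⟨by omega, by omega⟩) h

theorem sum_smul_E_succ_apply (c : ℕ → ℂ) (a b : Fin (k+1)) :
    (∑ p ∈ Icc 2 (k+1), c p • E k p (p+1)) a b = if (b : ℕ) = a + 1 then c (a + 2) else 0 := by
  simp only [Matrix.sum_apply, Matrix.smul_apply, E, Matrix.of_apply, smul_eq_mul,
    mul_ite, mul_one, mul_zero]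
  rw [sum_eq_single ((a : ℕ) + 2)]
  · by_cases h : (b : ℕ) = a + 1
    · rw [if_pos ⟨rfl, by omega⟩, if_pos h]
    · rw [if_neg (by rintro ⟨-, h2⟩; omega), if_neg h]
  · rintro p - hp
    exact if_neg fun h => hp h.1.symm
  · intro h
    rw [if_neg]
    rintro ⟨-, hb⟩
    exact h (mem_Icc.mpr ⟨by omega, by omega⟩)

theorem Nmat_apply (a b : Fin (k+1)) :
    Nmat k a b = (if a = b then 1 else 0) - (if (b : ℕ) = a + 1 then 1 else 0) := by
  rw [Nmat, Matrix.sub_apply]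
  simpa only [one_smul] using congr($(sum_smul_E_diag_apply k (fun _ => 1) a b) -
    $(sum_smul_E_succ_apply k (fun _ => 1) a b))

theorem Cmat_apply_s13 (q : ℂ) (a b : Fin (k+1)) :
    Cmat k q a b = (if a = b then (qnum q (a + 1))⁻¹ else 0)
      - (if (b : ℕ) = a + 1 then (qnum q (a + 2))⁻¹ else 0) := by
  rw [Cmat, Matrix.sub_apply, sum_smul_E_diag_apply k (fun p => (qnum q (p-1))⁻¹),
    sum_smul_E_succ_apply k (fun p => (qnum q p)⁻¹), show (a : ℕ) + 2 - 1 = a + 1 from rfl]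

end Entries

theorem det_Nmat (k : ℕ) : (Nmat k).det = 1 := by
  have upper : (Nmat k).IsUpperTriangular := by
    intro i j (hij : j < i)
    rw [Nmat_apply, if_neg (by omega), if_neg (by omega), sub_zero]
  rw [det_of_isUpperTriangular upper]
  exact prod_eq_one fun i _ => by rw [Nmat_apply, if_pos rfl, if_neg (by omega), sub_zero]

theorem isUnit_det_Nmat (k : ℕ) : IsUnit (Nmat k).det := by
  rw [det_Nmat]
  exact isUnit_one

theorem Cmat_eq_Nmat_mul_diagonal (k : ℕ) (q : ℂ) :
    Cmat k q = Nmat k * diagonal fun i : Fin (k+1) => (qnum q (i + 1))⁻¹ := by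
  ext a b
  rw [mul_diagonal, Cmat_apply_s13, Nmat_apply]
  by_cases hab : a = b
  · subst hab
    simp
  · by_cases hsucc : (b : ℕ) = a + 1
    · simp [hab, hsucc, show (a : ℕ) + 2 = a + 1 + 1 by omega]
    · simp [hab, hsucc]

theorem inv_Cmat (k : ℕ) {t : ℂ} (ht : ∀ m : ℕ, 1 ≤ m → m ≤ k + 1 → qnum t m ≠ 0) :
    (Cmat k t)⁻¹ = (diagonal fun i : Fin (k+1) => qnum t (i + 1)) * (Nmat k)⁻¹ := by
  refine inv_eq_left_inv ?_
  rw [Cmat_eq_Nmat_mul_diagonal, Matrix.mul_assoc,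
    nonsing_inv_mul_cancel_left _ _ (isUnit_det_Nmat k),
    diagonal_mul_diagonal, ← diagonal_one]
  exact congrArg diagonal <| funext fun i => mul_inv_cancel₀ (ht _ (by omega) (by omega))

theorem Cmat_mul_inv_Cmat (k : ℕ) (s : ℂ) {t : ℂ}
    (ht : ∀ m : ℕ, 1 ≤ m → m ≤ k + 1 → qnum t m ≠ 0) :
    Cmat k s * (Cmat k t)⁻¹
      = Nmat k * (diagonal fun i : Fin (k+1) => qnum t (i + 1) / qnum s (i + 1)) * (Nmat k)⁻¹ := by
  rw [Cmat_eq_Nmat_mul_diagonal, inv_Cmat k ht, Matrix.mul_assoc (Nmat k),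
    ← Matrix.mul_assoc _ _ (Nmat k)⁻¹, diagonal_mul_diagonal, Matrix.mul_assoc]
  simp only [inv_mul_eq_div]

theorem Cmat_conjugate_diagonal_general (k : ℕ) (q r : ℂ)
    (hgenr : ∀ m : ℕ, 1 ≤ m → m ≤ k + 1 → qnum r m ≠ 0) :
    (Nmat k)⁻¹ * (Cmat k q * (Cmat k r)⁻¹) * Nmat k
      = Matrix.diagonal (fun i : Fin (k+1) => qnum r ((i : ℕ) + 1) / qnum q ((i : ℕ) + 1)) ∧
    (∀ s t : ℂ, s ≠ 0 → t ≠ 0 →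
      (∀ m : ℕ, 1 ≤ m → m ≤ k + 1 → qnum s m ≠ 0) →
      (∀ m : ℕ, 1 ≤ m → m ≤ k + 1 → qnum t m ≠ 0) →
      Commute (Cmat k q * (Cmat k r)⁻¹) (Cmat k s * (Cmat k t)⁻¹)) := by
  have hN := isUnit_det_Nmat k
  refine ⟨?_, fun s t _ _ _ hgent => ?_⟩
  · rw [Cmat_mul_inv_Cmat k q hgenr, nonsing_inv_mul_conj_mul hN]
  · rw [Cmat_mul_inv_Cmat k q hgenr, Cmat_mul_inv_Cmat k s hgent]
    exact (commute_diagonal _ _).mul_mul_nonsing_inv hN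

/-- `N⁻¹ C(q) C(r)⁻¹ N = diag(1, (2)_r/(2)_q, ..., (k+1)_r/(k+1)_q)`; in particular the
matrices `C(q) C(r)⁻¹` for different values of the parameters commute. -/
theorem Cmat_conjugate_diagonal (k : ℕ) (q r : ℂ) (hq : q ≠ 0) (hr : r ≠ 0)
    (hgenq : ∀ m : ℕ, 1 ≤ m → m ≤ k + 1 → qnum q m ≠ 0)
    (hgenr : ∀ m : ℕ, 1 ≤ m → m ≤ k + 1 → qnum r m ≠ 0) :
    (Nmat k)⁻¹ * (Cmat k q * (Cmat k r)⁻¹) * Nmat k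
      = Matrix.diagonal (fun i : Fin (k+1) => qnum r ((i : ℕ) + 1) / qnum q ((i : ℕ) + 1)) ∧
    (∀ s t : ℂ, s ≠ 0 → t ≠ 0 →
      (∀ m : ℕ, 1 ≤ m → m ≤ k + 1 → qnum s m ≠ 0) →
      (∀ m : ℕ, 1 ≤ m → m ≤ k + 1 → qnum t m ≠ 0) →
      Commute (Cmat k q * (Cmat k r)⁻¹) (Cmat k s * (Cmat k t)⁻¹)) :=
  Cmat_conjugate_diagonal_general k q r hgenr
end
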